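/- Fix an integer ν ≥ 1 and let P¹(z) = (λ z₁, z₂) (i.e. the linear pair with matrix diag(λ,1)), where λ ∈ ℂ \ E. Then for every integer d ≥ 2 with d ≠ ν+1 the linear map L_{P¹,d} : 𝒱_d → 𝒱_d is surjective, while the image of L_{P¹,ν+1} is the span of { v_{ν+1}^h : 1 ≤ h ≤ 2ν+3, h ≠ ν+1 }; in particular (z₁^{ν+1}, 0) does not lie in the image of L_{P¹,ν+1}. -/

import Mathlib

noncomputable section

/-- An element `H ∈ 𝒱_d`, that is a pair of homogeneous polynomials of degree `d` whose first
component is divisible by `z₁`, encoded by the data `(Ȟ₁, H₂)` with `H₁ = z₁ Ȟ₁`. -/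
def Vpair (Hc H2 : MvPolynomial (Fin 2) ℂ) : Fin 2 → MvPolynomial (Fin 2) ℂ :=
  ![MvPolynomial.X 0 * Hc, H2]

/-- The linear map `L_{P,d}(H) = Jac(P)·H − Jac(H)·P + ν Ȟ₁ P`, on `H = (z₁ Ȟ₁, H₂) ∈ 𝒱_d`. -/
def Lmap (ν : ℕ) (P : Fin 2 → MvPolynomial (Fin 2) ℂ) (Hc H2 : MvPolynomial (Fin 2) ℂ) :
    Fin 2 → MvPolynomial (Fin 2) ℂ :=
  fun i => (∑ j : Fin 2, MvPolynomial.pderiv j (P i) * Vpair Hc H2 j)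
    - (∑ j : Fin 2, MvPolynomial.pderiv j (Vpair Hc H2 i) * P j)
    + (ν : ℂ) • (Hc * P i)

/-- The basis `v_d^h` of `𝒱̃_d`: `v_d^h = (z₁^h z₂^{d−h}, 0)` for `0 ≤ h ≤ d` and
`v_d^{d+1+k} = (0, z₁^k z₂^{d−k})` for `0 ≤ k ≤ d`. -/
def vmon (d h : ℕ) : Fin 2 → MvPolynomial (Fin 2) ℂ :=
  if h ≤ d then ![MvPolynomial.X 0 ^ h * MvPolynomial.X 1 ^ (d - h), 0]
  else ![0, MvPolynomial.X 0 ^ (h - (d + 1)) * MvPolynomial.X 1 ^ (d - (h - (d + 1)))]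

/-- The exceptional set `E = ⋃_{q=1}^{ν} { p/q : p ∈ ℕ } ∪ { 1/d : d ≥ 2 } ∪ {0} ∪ ℚ⁻ ⊆ ℂ`. -/
def Eset (ν : ℕ) : Set ℂ :=
  {x : ℂ | ∃ q p : ℕ, 1 ≤ q ∧ q ≤ ν ∧ x = (p : ℂ) / q}
    ∪ {x : ℂ | ∃ d : ℕ, 2 ≤ d ∧ x = 1 / (d : ℂ)}
    ∪ {0}
    ∪ {x : ℂ | ∃ r : ℚ, r < 0 ∧ x = (r : ℂ)}

open MvPolynomial Finset


def ee (a b : ℕ) : Fin 2 →₀ ℕ := Finsupp.single 0 a + Finsupp.single 1 b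

lemma ee_apply0 (a b : ℕ) : ee a b 0 = a := by simp [ee, Finsupp.single_apply]
lemma ee_apply1 (a b : ℕ) : ee a b 1 = b := by simp [ee, Finsupp.single_apply]

lemma degree_fin2 (u : Fin 2 →₀ ℕ) : u.degree = u 0 + u 1 := by
  rw [Finsupp.degree_apply]
  rw [Finset.sum_subset (Finset.subset_univ u.support)
    (fun x _ hx => Finsupp.notMem_support_iff.mp hx)]
  exact Fin.sum_univ_two (fun x => u x)

lemma ee_degree (a b : ℕ) : (ee a b).degree = a + b := by
  rw [degree_fin2, ee_apply0, ee_apply1]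

lemma fin2_eq (u : Fin 2 →₀ ℕ) : u = ee (u 0) (u 1) := by
  ext x
  fin_cases x <;> simp [ee, Finsupp.single_apply]

lemma ee_inj {a b a' b' : ℕ} (h : ee a b = ee a' b') : a = a' ∧ b = b' := by
  constructor
  · have := congrFun (congrArg (fun f : Fin 2 →₀ ℕ => (f : Fin 2 → ℕ)) h) 0
    simpa [ee_apply0] using this
  · have := congrFun (congrArg (fun f : Fin 2 →₀ ℕ => (f : Fin 2 → ℕ)) h) 1
    simpa [ee_apply1] using this

lemma single0_add_ee (a b : ℕ) :
    Finsupp.single (0 : Fin 2) 1 + ee a b = ee (a + 1) b := by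
  ext x
  fin_cases x <;> simp [ee, Finsupp.single_apply] <;> omega

lemma single1_add_ee (a b : ℕ) :
    Finsupp.single (1 : Fin 2) 1 + ee a b = ee a (b + 1) := by
  ext x
  fin_cases x <;> simp [ee, Finsupp.single_apply] <;> omega

lemma X0_mul_monomial (a b : ℕ) (q : ℂ) :
    X (0 : Fin 2) * monomial (ee a b) q = monomial (ee (a + 1) b) q := by
  rw [X, monomial_mul, one_mul, single0_add_ee]

lemma X1_mul_monomial (a b : ℕ) (q : ℂ) :
    X (1 : Fin 2) * monomial (ee a b) q = monomial (ee a (b + 1)) q := by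
  rw [X, monomial_mul, one_mul, single1_add_ee]

lemma X0_mul_pderiv0 (a b : ℕ) (q : ℂ) :
    X (0 : Fin 2) * pderiv 0 (monomial (ee a b) q) = monomial (ee a b) (q * a) := by
  rw [pderiv_monomial, ee_apply0]
  rcases Nat.eq_zero_or_pos a with ha | ha
  · simp [ha]
  · obtain ⟨n, rfl⟩ : ∃ n, a = n + 1 := ⟨a - 1, by omega⟩
    have h : Finsupp.single (0 : Fin 2) 1 + (ee (n + 1) b - Finsupp.single 0 1)
        = ee (n + 1) b := by
      ext x
      fin_cases x <;> simp [ee, Finsupp.single_apply, Finsupp.tsub_apply] <;> omega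
    rw [X, monomial_mul, one_mul, h]

lemma X1_mul_pderiv1 (a b : ℕ) (q : ℂ) :
    X (1 : Fin 2) * pderiv 1 (monomial (ee a b) q) = monomial (ee a b) (q * b) := by
  rw [pderiv_monomial, ee_apply1]
  rcases Nat.eq_zero_or_pos b with hb | hb
  · simp [hb]
  · obtain ⟨n, rfl⟩ : ∃ n, b = n + 1 := ⟨b - 1, by omega⟩
    have h : Finsupp.single (1 : Fin 2) 1 + (ee a (n + 1) - Finsupp.single 1 1)
        = ee a (n + 1) := by
      ext x
      fin_cases x <;> simp [ee, Finsupp.single_apply, Finsupp.tsub_apply] <;> omega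
    rw [X, monomial_mul, one_mul, h]

def opA (ν : ℕ) (l : ℂ) : MvPolynomial (Fin 2) ℂ →ₗ[ℂ] MvPolynomial (Fin 2) ℂ :=
  ((ν : ℂ) * l) • LinearMap.id
    - l • ((LinearMap.mulLeft ℂ (X 0)).comp (pderiv 0).toLinearMap)
    - (LinearMap.mulLeft ℂ (X 1)).comp (pderiv 1).toLinearMap

def opB (l : ℂ) : MvPolynomial (Fin 2) ℂ →ₗ[ℂ] MvPolynomial (Fin 2) ℂ :=
  LinearMap.id
    - l • ((LinearMap.mulLeft ℂ (X 0)).comp (pderiv 0).toLinearMap)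
    - (LinearMap.mulLeft ℂ (X 1)).comp (pderiv 1).toLinearMap

lemma opA_monomial (ν : ℕ) (l : ℂ) (a b : ℕ) (q : ℂ) :
    opA ν l (monomial (ee a b) q) =
      monomial (ee a b) (((ν : ℂ) * l - l * a - b) * q) := by
  simp only [opA, LinearMap.sub_apply, LinearMap.smul_apply, LinearMap.id_apply,
    LinearMap.comp_apply, LinearMap.mulLeft_apply]
  rw [show ((pderiv (0:Fin 2)).toLinearMap (monomial (ee a b) q)) = pderiv 0 (monomial (ee a b) q) from rfl,
    show ((pderiv (1:Fin 2)).toLinearMap (monomial (ee a b) q)) = pderiv 1 (monomial (ee a b) q) from rfl]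
  rw [X0_mul_pderiv0, X1_mul_pderiv1, smul_monomial, smul_monomial]
  rw [← map_sub, ← map_sub]
  congr 1
  simp only [smul_eq_mul]
  ring

lemma opB_monomial (l : ℂ) (a b : ℕ) (q : ℂ) :
    opB l (monomial (ee a b) q) =
      monomial (ee a b) ((1 - l * a - b) * q) := by
  simp only [opB, LinearMap.sub_apply, LinearMap.smul_apply, LinearMap.id_apply,
    LinearMap.comp_apply, LinearMap.mulLeft_apply]
  rw [show ((pderiv (0:Fin 2)).toLinearMap (monomial (ee a b) q)) = pderiv 0 (monomial (ee a b) q) from rfl,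
    show ((pderiv (1:Fin 2)).toLinearMap (monomial (ee a b) q)) = pderiv 1 (monomial (ee a b) q) from rfl]
  rw [X0_mul_pderiv0, X1_mul_pderiv1, smul_monomial]
  rw [← map_sub, ← map_sub]
  congr 1
  simp only [smul_eq_mul]
  ring


lemma Lmap_eq (ν : ℕ) (l : ℂ) (Hc H2 : MvPolynomial (Fin 2) ℂ) :
    Lmap ν ![l • X 0, X 1] Hc H2
      = ![X 0 * opA ν l Hc, opB l H2 + (ν : ℂ) • (X 1 * Hc)] := by
  funext i
  fin_cases i <;>
    simp [Lmap, Vpair, opA, opB, Fin.sum_univ_two, Derivation.leibniz, pderiv_X,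
      Pi.single_apply, smul_eq_C_mul] <;> ring

lemma ee_inj0 {a b a' b' : ℕ} (h : ee a b = ee a' b') : a = a' := by
  have := congrFun (congrArg (fun f : Fin 2 →₀ ℕ => (f : Fin 2 → ℕ)) h) 0
  simpa [ee_apply0] using this

/-- representation of a homogeneous polynomial of degree c -/
lemma rep {c : ℕ} {Q : MvPolynomial (Fin 2) ℂ} (hQ : Q.IsHomogeneous c) :
    Q = ∑ a ∈ range (c + 1), monomial (ee a (c - a)) (coeff (ee a (c - a)) Q) := by
  apply MvPolynomial.ext
  intro u
  rw [coeff_sum (range (c + 1)) (fun a => monomial (ee a (c - a)) (coeff (ee a (c - a)) Q)) u]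
  simp only [coeff_monomial]
  by_cases hu : coeff u Q = 0
  · rw [hu]
    symm
    refine Finset.sum_eq_zero fun a _ => ?_
    split_ifs with h
    · rw [h, hu]
    · rfl
  · have hdeg : u.degree = c := by
      by_contra hne
      exact hu (hQ.coeff_eq_zero hne)
    have h01 : u 0 + u 1 = c := by rw [← degree_fin2, hdeg]
    rw [eq_comm, Finset.sum_eq_single (u 0)]
    · have : ee (u 0) (c - u 0) = u := by
        rw [show c - u 0 = u 1 by omega]
        exact (fin2_eq u).symm
      rw [if_pos this, this]
    · intro a _ ha
      rw [if_neg]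
      intro h
      rw [fin2_eq u] at h
      exact ha (ee_inj0 h)
    · intro h
      exact absurd (Finset.mem_range.mpr (by omega)) h

lemma hom_sum {n c : ℕ} (f : ℕ → ℂ) (h : n ≤ c + 1) :
    (∑ a ∈ range n, monomial (ee a (c - a)) (f a)).IsHomogeneous c := by
  apply MvPolynomial.IsHomogeneous.sum
  intro a ha
  apply isHomogeneous_monomial
  rw [show (ee a (c-a)).degree = a + (c - a) by
    rw [degree_fin2, ee_apply0, ee_apply1]]
  have := Finset.mem_range.mp ha
  omega

lemma coeff_sum_ee {n c : ℕ} (f : ℕ → ℂ) (a : ℕ) (ha : a < n) :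
    coeff (ee a (c - a)) (∑ a' ∈ range n, monomial (ee a' (c - a')) (f a')) = f a := by
  rw [coeff_sum]
  simp only [coeff_monomial]
  rw [Finset.sum_eq_single a]
  · rw [if_pos rfl]
  · intro a' _ ha'
    rw [if_neg]
    intro h
    exact ha' (ee_inj0 h)
  · intro h
    exact absurd (Finset.mem_range.mpr ha) h

lemma alpha_ne {ν : ℕ} {l : ℂ} (hl : l ∉ Eset ν) (a b : ℕ) (hab : a ≠ ν ∨ b ≠ 0) :
    (ν : ℂ) * l - l * a - b ≠ 0 := by
  intro h
  have h' : l * ((ν : ℂ) - a) = b := by linear_combination h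
  rcases lt_trichotomy a ν with hlt | heq | hgt
  · apply hl
    left; left; left
    refine ⟨ν - a, b, by omega, by omega, ?_⟩
    have hc : ((ν - a : ℕ) : ℂ) = (ν : ℂ) - a := by
      push_cast [Nat.cast_sub hlt.le]; ring
    have hne : ((ν - a : ℕ) : ℂ) ≠ 0 := by
      exact Nat.cast_ne_zero.mpr (by omega : ν - a ≠ 0)
    rw [eq_div_iff hne, hc]
    linear_combination h'
  · subst heq
    simp only [sub_self, mul_zero] at h'
    have : b = 0 := by exact_mod_cast h'.symm
    rcases hab with h1 | h2
    · exact h1 rfl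
    · exact h2 this
  · have hne : (ν : ℂ) - a ≠ 0 := by
      have : (ν : ℂ) ≠ a := by exact_mod_cast show ν ≠ a by omega
      exact sub_ne_zero_of_ne this
    rcases Nat.eq_zero_or_pos b with hb | hb
    · apply hl
      left; right
      have : l = 0 := by
        have := h'
        rw [hb] at this
        simp at this
        rcases this with h1 | h2
        · exact h1
        · exact absurd h2 hne
      simpa [Set.mem_singleton_iff] using this
    · apply hl
      right
      refine ⟨(b : ℚ) / ((ν : ℚ) - a), ?_, ?_⟩
      · apply div_neg_of_pos_of_neg
        · exact_mod_cast hb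
        · have : (ν : ℚ) < a := by exact_mod_cast hgt
          linarith
      · have : l = (b : ℂ) / ((ν : ℂ) - a) := by
          rw [eq_div_iff hne]; exact h'
        rw [this]
        push_cast
        ring

lemma beta_ne {ν : ℕ} {l : ℂ} (hl : l ∉ Eset ν) (b e : ℕ) (h2 : 2 ≤ b + e) :
    (1 : ℂ) - l * b - e ≠ 0 := by
  intro h
  have h' : l * b = 1 - e := by linear_combination -h
  rcases Nat.eq_zero_or_pos b with hb | hb
  · subst hb
    simp only [Nat.cast_zero, mul_zero] at h'
    have : (e : ℂ) = 1 := by linear_combination h'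
    have : e = 1 := by exact_mod_cast this
    omega
  · have hbne : (b : ℂ) ≠ 0 := Nat.cast_ne_zero.mpr (by omega)
    match e, h2 with
    | 0, _ =>
      apply hl
      left; left; right
      refine ⟨b, by omega, ?_⟩
      rw [eq_div_iff hbne]
      simpa using h'
    | 1, _ =>
      apply hl
      left; right
      have : l = 0 := by
        have hl0 : l * b = 0 := by
          rw [h']; norm_num
        rcases mul_eq_zero.mp hl0 with h1 | h1
        · exact h1
        · exact absurd h1 hbne
      simpa [Set.mem_singleton_iff] using this
    | (e + 2), _ =>
      apply hl
      right
      refine ⟨(1 - ((e + 2 : ℕ) : ℚ)) / b, ?_, ?_⟩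
      · apply div_neg_of_neg_of_pos
        · push_cast; linarith
        · exact_mod_cast hb
      · have : l = (1 - ((e + 2 : ℕ) : ℂ)) / b := by
          rw [eq_div_iff hbne]; push_cast at h' ⊢; linear_combination h'
        rw [this]
        push_cast
        ring

lemma X_pow_ee (a b : ℕ) :
    (X (0 : Fin 2) ^ a * X 1 ^ b : MvPolynomial (Fin 2) ℂ) = monomial (ee a b) 1 := by
  rw [X_pow_eq_monomial, X_pow_eq_monomial, monomial_mul, one_mul]
  rfl

lemma erase_split (ν : ℕ) :
    (Icc 1 (2 * ν + 3)).erase (ν + 1)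
      = ((range ν).image (· + 1)) ∪ ((range (ν + 2)).image (fun k => ν + 2 + k)) := by
  ext h
  simp only [Finset.mem_erase, Finset.mem_Icc, Finset.mem_image, Finset.mem_union,
    Finset.mem_range]
  constructor
  · rintro ⟨hne, h1, h2⟩
    rcases le_or_gt h ν with hle | hgt
    · exact Or.inl ⟨h - 1, by omega, by omega⟩
    · exact Or.inr ⟨h - (ν + 2), by omega, by omega⟩
  · rintro (⟨a, ha, rfl⟩ | ⟨k, hk, rfl⟩) <;> omega

lemma sum_erase_eq (ν : ℕ) (F : ℕ → MvPolynomial (Fin 2) ℂ) :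
    ∑ h ∈ (Icc 1 (2 * ν + 3)).erase (ν + 1), F h
      = (∑ a ∈ range ν, F (a + 1)) + ∑ k ∈ range (ν + 2), F (ν + 2 + k) := by
  rw [erase_split, Finset.sum_union, Finset.sum_image (by intro x _ y _ hxy; simpa using hxy),
    Finset.sum_image (by intro x _ y _ hxy; simpa using hxy)]
  rw [Finset.disjoint_left]
  intro x hx hy
  simp only [Finset.mem_image, Finset.mem_range] at hx hy
  omega

lemma sum_vmon_0 (ν : ℕ) (c : ℕ → ℂ) :
    (∑ h ∈ (Icc 1 (2 * ν + 3)).erase (ν + 1), c h • vmon (ν + 1) h) 0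
      = ∑ a ∈ range ν, monomial (ee (a + 1) (ν - a)) (c (a + 1)) := by
  rw [Finset.sum_apply]
  simp only [Pi.smul_apply]
  rw [sum_erase_eq ν (fun h => c h • vmon (ν + 1) h 0)]
  have h2 : ∑ k ∈ range (ν + 2), c (ν + 2 + k) • vmon (ν + 1) (ν + 2 + k) 0 = 0 := by
    refine Finset.sum_eq_zero fun k _ => ?_
    rw [vmon, if_neg (by omega)]
    simp
  rw [h2, add_zero]
  refine Finset.sum_congr rfl fun a ha => ?_
  have := Finset.mem_range.mp ha
  rw [vmon, if_pos (by omega)]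
  show c (a + 1) • (X 0 ^ (a + 1) * X 1 ^ (ν + 1 - (a + 1))) = _
  rw [X_pow_ee, smul_monomial, smul_eq_mul, mul_one,
    show ν + 1 - (a + 1) = ν - a by omega]

lemma sum_vmon_1 (ν : ℕ) (c : ℕ → ℂ) :
    (∑ h ∈ (Icc 1 (2 * ν + 3)).erase (ν + 1), c h • vmon (ν + 1) h) 1
      = ∑ k ∈ range (ν + 2), monomial (ee k (ν + 1 - k)) (c (ν + 2 + k)) := by
  rw [Finset.sum_apply]
  simp only [Pi.smul_apply]
  rw [sum_erase_eq ν (fun h => c h • vmon (ν + 1) h 1)]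
  have h1 : ∑ a ∈ range ν, c (a + 1) • vmon (ν + 1) (a + 1) 1 = 0 := by
    refine Finset.sum_eq_zero fun a ha => ?_
    have := Finset.mem_range.mp ha
    rw [vmon, if_pos (by omega)]
    simp
  rw [h1, zero_add]
  refine Finset.sum_congr rfl fun k hk => ?_
  rw [vmon, if_neg (by omega)]
  show c (ν + 2 + k) • (X 0 ^ (ν + 2 + k - (ν + 1 + 1)) * X 1 ^ (ν + 1 - (ν + 2 + k - (ν + 1 + 1)))) = _
  rw [show ν + 2 + k - (ν + 1 + 1) = k by omega, X_pow_ee, smul_monomial, smul_eq_mul, mul_one]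


/-- For `P¹(z) = (λz₁, z₂)` with `λ ∉ E`, the map `L_{P¹,d} : 𝒱_d → 𝒱_d` is surjective for
every `d ≥ 2` with `d ≠ ν+1`, while the image of `L_{P¹,ν+1}` is the span of the basis
vectors `v_{ν+1}^h`, `1 ≤ h ≤ 2ν+3`, `h ≠ ν+1`; in particular `(z₁^{ν+1}, 0)` is not in the
image of `L_{P¹,ν+1}`. -/
theorem Lmap_image_generic (ν : ℕ) (hν : 1 ≤ ν) (l : ℂ) (hl : l ∉ Eset ν)
    (P : Fin 2 → MvPolynomial (Fin 2) ℂ)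
    (hP : P = ![l • MvPolynomial.X 0, MvPolynomial.X 1]) :
    (∀ d : ℕ, 2 ≤ d → d ≠ ν + 1 →
      ∀ Q : Fin 2 → MvPolynomial (Fin 2) ℂ,
        (∀ i, (Q i).IsHomogeneous d) → MvPolynomial.X 0 ∣ Q 0 →
        ∃ Hc H2 : MvPolynomial (Fin 2) ℂ,
          Hc.IsHomogeneous (d - 1) ∧ H2.IsHomogeneous d ∧ Lmap ν P Hc H2 = Q) ∧
    ({Q : Fin 2 → MvPolynomial (Fin 2) ℂ | ∃ Hc H2 : MvPolynomial (Fin 2) ℂ,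
        Hc.IsHomogeneous ν ∧ H2.IsHomogeneous (ν + 1) ∧ Lmap ν P Hc H2 = Q}
      = {Q : Fin 2 → MvPolynomial (Fin 2) ℂ | ∃ c : ℕ → ℂ,
          Q = ∑ h ∈ (Finset.Icc 1 (2 * ν + 3)).erase (ν + 1), c h • vmon (ν + 1) h}) ∧
    ¬ (∃ Hc H2 : MvPolynomial (Fin 2) ℂ,
        Hc.IsHomogeneous ν ∧ H2.IsHomogeneous (ν + 1) ∧
        Lmap ν P Hc H2 = vmon (ν + 1) (ν + 1)) := by
  subst hP
  -- PART 1 : surjectivity for d ≠ ν + 1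
  have part1 : ∀ d : ℕ, 2 ≤ d → d ≠ ν + 1 →
      ∀ Q : Fin 2 → MvPolynomial (Fin 2) ℂ,
        (∀ i, (Q i).IsHomogeneous d) → MvPolynomial.X 0 ∣ Q 0 →
        ∃ Hc H2 : MvPolynomial (Fin 2) ℂ,
          Hc.IsHomogeneous (d - 1) ∧ H2.IsHomogeneous d ∧
            Lmap ν ![l • MvPolynomial.X 0, MvPolynomial.X 1] Hc H2 = Q := by
    intro d hd2 hdn Q hQ hdiv
    have hq0 : coeff (ee 0 (d - 0)) (Q 0) = 0 := by
      obtain ⟨R, hR⟩ := hdiv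
      rw [hR, coeff_X_mul', if_neg]
      simp [Finsupp.mem_support_iff, ee_apply0]
    have hQ0 : Q 0 = ∑ a ∈ range (d + 1), monomial (ee a (d - a)) (coeff (ee a (d - a)) (Q 0)) :=
      rep (hQ 0)
    have hQ0' : Q 0 = X 0 * ∑ a ∈ range d,
        monomial (ee a (d - 1 - a)) (coeff (ee (a + 1) (d - (a + 1))) (Q 0)) := by
      conv_lhs => rw [hQ0]
      rw [Finset.mul_sum, Finset.sum_range_succ', hq0]
      rw [show (monomial (ee 0 (d - 0))) (0 : ℂ) = 0 from by simp]
      rw [add_zero]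
      refine Finset.sum_congr rfl fun a ha => ?_
      rw [X0_mul_monomial, show d - 1 - a = d - (a + 1) by omega]
    have hα : ∀ a, a < d → (ν : ℂ) * l - l * a - ((d - 1 - a : ℕ) : ℂ) ≠ 0 := by
      intro a ha
      apply alpha_ne hl
      by_cases hA : a = ν
      · right; omega
      · left; exact hA
    have hβ : ∀ b, b < d + 1 → (1 : ℂ) - l * b - ((d - b : ℕ) : ℂ) ≠ 0 := by
      intro b hb
      exact beta_ne hl b (d - b) (by omega)
    refine ⟨∑ a ∈ range d, monomial (ee a (d - 1 - a))
        (coeff (ee (a + 1) (d - (a + 1))) (Q 0) / ((ν : ℂ) * l - l * a - ((d - 1 - a : ℕ) : ℂ))),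
      ∑ b ∈ range (d + 1), monomial (ee b (d - b))
        ((coeff (ee b (d - b)) (Q 1) - (ν : ℂ) * (if b < d then
            coeff (ee (b + 1) (d - (b + 1))) (Q 0) / ((ν : ℂ) * l - l * b - ((d - 1 - b : ℕ) : ℂ))
          else 0)) / ((1 : ℂ) - l * b - ((d - b : ℕ) : ℂ))),
      hom_sum _ (by omega), hom_sum _ (by omega), ?_⟩
    have hHcA : opA ν l (∑ a ∈ range d, monomial (ee a (d - 1 - a))
        (coeff (ee (a + 1) (d - (a + 1))) (Q 0) / ((ν : ℂ) * l - l * a - ((d - 1 - a : ℕ) : ℂ))))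
        = ∑ a ∈ range d, monomial (ee a (d - 1 - a)) (coeff (ee (a + 1) (d - (a + 1))) (Q 0)) := by
      rw [map_sum]
      refine Finset.sum_congr rfl fun a ha => ?_
      rw [opA_monomial, mul_comm, div_mul_cancel₀ _ (hα a (Finset.mem_range.mp ha))]
    have hX1Hc : X 1 * (∑ a ∈ range d, monomial (ee a (d - 1 - a))
        (coeff (ee (a + 1) (d - (a + 1))) (Q 0) / ((ν : ℂ) * l - l * a - ((d - 1 - a : ℕ) : ℂ))))
        = ∑ b ∈ range (d + 1), monomial (ee b (d - b)) (if b < d then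
            coeff (ee (b + 1) (d - (b + 1))) (Q 0) / ((ν : ℂ) * l - l * b - ((d - 1 - b : ℕ) : ℂ))
          else 0) := by
      rw [Finset.mul_sum, Finset.sum_range_succ, if_neg (lt_irrefl d)]
      rw [show (monomial (ee d (d - d))) (0 : ℂ) = 0 from by simp, add_zero]
      refine Finset.sum_congr rfl fun a ha => ?_
      have haa := Finset.mem_range.mp ha
      rw [X1_mul_monomial, show d - 1 - a + 1 = d - a by omega, if_pos haa]
    have hH2B : opB l (∑ b ∈ range (d + 1), monomial (ee b (d - b))
        ((coeff (ee b (d - b)) (Q 1) - (ν : ℂ) * (if b < d then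
            coeff (ee (b + 1) (d - (b + 1))) (Q 0) / ((ν : ℂ) * l - l * b - ((d - 1 - b : ℕ) : ℂ))
          else 0)) / ((1 : ℂ) - l * b - ((d - b : ℕ) : ℂ))))
        = ∑ b ∈ range (d + 1), monomial (ee b (d - b))
          (coeff (ee b (d - b)) (Q 1) - (ν : ℂ) * (if b < d then
            coeff (ee (b + 1) (d - (b + 1))) (Q 0) / ((ν : ℂ) * l - l * b - ((d - 1 - b : ℕ) : ℂ))
          else 0)) := by
      rw [map_sum]
      refine Finset.sum_congr rfl fun b hb => ?_
      rw [opB_monomial, mul_comm, div_mul_cancel₀ _ (hβ b (Finset.mem_range.mp hb))]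
    rw [Lmap_eq]
    funext i
    fin_cases i
    · show X 0 * opA ν l _ = Q 0
      rw [hHcA, ← hQ0']
    · show opB l _ + (ν : ℂ) • (X 1 * _) = Q 1
      rw [hH2B, hX1Hc, Finset.smul_sum, ← Finset.sum_add_distrib]
      conv_rhs => rw [rep (hQ 1)]
      refine Finset.sum_congr rfl fun b hb => ?_
      rw [smul_monomial, ← map_add]
      congr 1
      simp only [smul_eq_mul]
      ring
  have part2 : {Q : Fin 2 → MvPolynomial (Fin 2) ℂ | ∃ Hc H2 : MvPolynomial (Fin 2) ℂ,
      Hc.IsHomogeneous ν ∧ H2.IsHomogeneous (ν + 1) ∧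
        Lmap ν ![l • MvPolynomial.X 0, MvPolynomial.X 1] Hc H2 = Q}
      = {Q : Fin 2 → MvPolynomial (Fin 2) ℂ | ∃ c : ℕ → ℂ,
          Q = ∑ h ∈ (Finset.Icc 1 (2 * ν + 3)).erase (ν + 1), c h • vmon (ν + 1) h} := by
    apply Set.ext
    intro Q
    simp only [Set.mem_setOf_eq]
    constructor
    · rintro ⟨Hc, H2, hHc, hH2, rfl⟩
      set cf : ℕ → ℂ := fun h => if h ≤ ν + 1 then
          ((ν : ℂ) * l - l * ((h - 1 : ℕ) : ℂ) - ((ν - (h - 1) : ℕ) : ℂ))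
            * coeff (ee (h - 1) (ν - (h - 1))) Hc
        else ((1 : ℂ) - l * ((h - (ν + 2) : ℕ) : ℂ) - ((ν + 1 - (h - (ν + 2)) : ℕ) : ℂ))
              * coeff (ee (h - (ν + 2)) (ν + 1 - (h - (ν + 2)))) H2
            + (ν : ℂ) * (if h - (ν + 2) ≤ ν then coeff (ee (h - (ν + 2)) (ν - (h - (ν + 2)))) Hc
              else 0) with hcf
      refine ⟨cf, ?_⟩
      have hX1 : X 1 * Hc = ∑ b ∈ range (ν + 2), monomial (ee b (ν + 1 - b))
          (if b ≤ ν then coeff (ee b (ν - b)) Hc else 0) := by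
        have hsucc : ∑ b ∈ range (ν + 2), monomial (ee b (ν + 1 - b))
            (if b ≤ ν then coeff (ee b (ν - b)) Hc else (0 : ℂ))
            = (∑ b ∈ range (ν + 1), monomial (ee b (ν + 1 - b))
                (if b ≤ ν then coeff (ee b (ν - b)) Hc else (0 : ℂ)))
              + monomial (ee (ν + 1) (ν + 1 - (ν + 1)))
                (if ν + 1 ≤ ν then coeff (ee (ν + 1) (ν - (ν + 1))) Hc else (0 : ℂ)) :=
          Finset.sum_range_succ _ (ν + 1)
        rw [hsucc, if_neg (by omega), map_zero, add_zero]
        conv_lhs => rw [rep hHc]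
        rw [Finset.mul_sum]
        refine Finset.sum_congr rfl fun a ha => ?_
        have haa := Finset.mem_range.mp ha
        rw [X1_mul_monomial, show ν - a + 1 = ν + 1 - a by omega, if_pos (by omega)]
      rw [Lmap_eq]
      funext i
      fin_cases i
      · show X 0 * opA ν l Hc
          = (∑ h ∈ (Finset.Icc 1 (2 * ν + 3)).erase (ν + 1), cf h • vmon (ν + 1) h) 0
        rw [sum_vmon_0]
        conv_lhs => rw [rep hHc]
        rw [map_sum, Finset.mul_sum]
        rw [Finset.sum_congr rfl (fun a (ha : a ∈ range (ν + 1)) => by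
          rw [opA_monomial, X0_mul_monomial] :
            ∀ a ∈ range (ν + 1), X 0 * opA ν l (monomial (ee a (ν - a)) (coeff (ee a (ν - a)) Hc))
              = monomial (ee (a + 1) (ν - a))
                  (((ν : ℂ) * l - l * a - ((ν - a : ℕ) : ℂ)) * coeff (ee a (ν - a)) Hc))]
        rw [Finset.sum_range_succ]
        rw [show ((ν : ℂ) * l - l * ν - ((ν - ν : ℕ) : ℂ)) * coeff (ee ν (ν - ν)) Hc = 0 from by
          push_cast [Nat.sub_self]; ring]
        rw [map_zero, add_zero]
        refine Finset.sum_congr rfl fun a ha => ?_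
        have haa := Finset.mem_range.mp ha
        have hval : cf (a + 1) = ((ν : ℂ) * l - l * a - ((ν - a : ℕ) : ℂ))
            * coeff (ee a (ν - a)) Hc := by
          rw [hcf]
          simp only [Nat.add_sub_cancel]
          rw [if_pos (by omega)]
        rw [hval]
      · show opB l H2 + (ν : ℂ) • (X 1 * Hc)
          = (∑ h ∈ (Finset.Icc 1 (2 * ν + 3)).erase (ν + 1), cf h • vmon (ν + 1) h) 1
        rw [sum_vmon_1, hX1]
        conv_lhs => rw [rep hH2]
        rw [map_sum]
        rw [Finset.sum_congr rfl (fun b (hb : b ∈ range (ν + 2)) => by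
          rw [opB_monomial] :
            ∀ b ∈ range (ν + 2), opB l (monomial (ee b (ν + 1 - b)) (coeff (ee b (ν + 1 - b)) H2))
              = monomial (ee b (ν + 1 - b))
                  (((1 : ℂ) - l * b - ((ν + 1 - b : ℕ) : ℂ)) * coeff (ee b (ν + 1 - b)) H2))]
        rw [Finset.smul_sum, ← Finset.sum_add_distrib]
        refine Finset.sum_congr rfl fun b hb => ?_
        rw [smul_monomial, ← map_add]
        have hval : cf (ν + 2 + b) = ((1 : ℂ) - l * b - ((ν + 1 - b : ℕ) : ℂ))
            * coeff (ee b (ν + 1 - b)) H2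
            + (ν : ℂ) * (if b ≤ ν then coeff (ee b (ν - b)) Hc else 0) := by
          rw [hcf]
          simp only [Nat.add_sub_cancel_left]
          rw [if_neg (by omega)]
        simp only [smul_eq_mul]
        rw [hval]
    · rintro ⟨c, rfl⟩
      have hα : ∀ a, a < ν → (ν : ℂ) * l - l * a - ((ν - a : ℕ) : ℂ) ≠ 0 := by
        intro a ha
        exact alpha_ne hl a (ν - a) (Or.inl (by omega))
      have hβ : ∀ b, b < ν + 2 → (1 : ℂ) - l * b - ((ν + 1 - b : ℕ) : ℂ) ≠ 0 := by
        intro b hb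
        exact beta_ne hl b (ν + 1 - b) (by omega)
      refine ⟨∑ a ∈ range (ν + 1), monomial (ee a (ν - a))
          (if a < ν then c (a + 1) / ((ν : ℂ) * l - l * a - ((ν - a : ℕ) : ℂ)) else 0),
        ∑ b ∈ range (ν + 2), monomial (ee b (ν + 1 - b))
          ((c (ν + 2 + b) - (ν : ℂ) * (if b < ν then
              c (b + 1) / ((ν : ℂ) * l - l * b - ((ν - b : ℕ) : ℂ)) else 0))
            / ((1 : ℂ) - l * b - ((ν + 1 - b : ℕ) : ℂ))),
        hom_sum _ (by omega), hom_sum _ (by omega), ?_⟩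
      have hX1 : X 1 * (∑ a ∈ range (ν + 1), monomial (ee a (ν - a))
          (if a < ν then c (a + 1) / ((ν : ℂ) * l - l * a - ((ν - a : ℕ) : ℂ)) else 0))
          = ∑ b ∈ range (ν + 2), monomial (ee b (ν + 1 - b))
            (if b < ν then c (b + 1) / ((ν : ℂ) * l - l * b - ((ν - b : ℕ) : ℂ)) else 0) := by
        have hsucc : ∑ b ∈ range (ν + 2), monomial (ee b (ν + 1 - b))
            (if b < ν then c (b + 1) / ((ν : ℂ) * l - l * b - ((ν - b : ℕ) : ℂ)) else (0 : ℂ))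
            = (∑ b ∈ range (ν + 1), monomial (ee b (ν + 1 - b))
                (if b < ν then c (b + 1) / ((ν : ℂ) * l - l * b - ((ν - b : ℕ) : ℂ)) else (0 : ℂ)))
              + monomial (ee (ν + 1) (ν + 1 - (ν + 1)))
                (if ν + 1 < ν then
                  c (ν + 1 + 1) / ((ν : ℂ) * l - l * ((ν + 1 : ℕ) : ℂ) - ((ν - (ν + 1) : ℕ) : ℂ))
                else (0 : ℂ)) :=
          Finset.sum_range_succ _ (ν + 1)
        rw [hsucc, if_neg (by omega), map_zero, add_zero, Finset.mul_sum]
        refine Finset.sum_congr rfl fun a ha => ?_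
        have haa := Finset.mem_range.mp ha
        rw [X1_mul_monomial, show ν - a + 1 = ν + 1 - a by omega]
      rw [Lmap_eq]
      funext i
      fin_cases i
      · show X 0 * opA ν l (∑ a ∈ range (ν + 1), monomial (ee a (ν - a))
            (if a < ν then c (a + 1) / ((ν : ℂ) * l - l * a - ((ν - a : ℕ) : ℂ)) else 0))
          = (∑ h ∈ (Finset.Icc 1 (2 * ν + 3)).erase (ν + 1), c h • vmon (ν + 1) h) 0
        rw [sum_vmon_0, map_sum, Finset.mul_sum]
        rw [Finset.sum_congr rfl (fun a (ha : a ∈ range (ν + 1)) => by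
          rw [opA_monomial, X0_mul_monomial] :
            ∀ a ∈ range (ν + 1), X 0 * opA ν l (monomial (ee a (ν - a))
                (if a < ν then c (a + 1) / ((ν : ℂ) * l - l * a - ((ν - a : ℕ) : ℂ)) else 0))
              = monomial (ee (a + 1) (ν - a))
                  (((ν : ℂ) * l - l * a - ((ν - a : ℕ) : ℂ)) * (if a < ν then
                    c (a + 1) / ((ν : ℂ) * l - l * a - ((ν - a : ℕ) : ℂ)) else 0)))]
        rw [Finset.sum_range_succ, if_neg (by omega), mul_zero, map_zero, add_zero]
        refine Finset.sum_congr rfl fun a ha => ?_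
        have haa := Finset.mem_range.mp ha
        rw [if_pos haa, mul_comm, div_mul_cancel₀ _ (hα a haa)]
      · show opB l (∑ b ∈ range (ν + 2), monomial (ee b (ν + 1 - b))
            ((c (ν + 2 + b) - (ν : ℂ) * (if b < ν then
                c (b + 1) / ((ν : ℂ) * l - l * b - ((ν - b : ℕ) : ℂ)) else 0))
              / ((1 : ℂ) - l * b - ((ν + 1 - b : ℕ) : ℂ))))
            + (ν : ℂ) • (X 1 * (∑ a ∈ range (ν + 1), monomial (ee a (ν - a))
              (if a < ν then c (a + 1) / ((ν : ℂ) * l - l * a - ((ν - a : ℕ) : ℂ)) else 0)))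
          = (∑ h ∈ (Finset.Icc 1 (2 * ν + 3)).erase (ν + 1), c h • vmon (ν + 1) h) 1
        rw [sum_vmon_1, map_sum, hX1]
        rw [Finset.sum_congr rfl (fun b (hb : b ∈ range (ν + 2)) => by
          rw [opB_monomial, mul_comm, div_mul_cancel₀ _ (hβ b (Finset.mem_range.mp hb))] :
            ∀ b ∈ range (ν + 2), opB l (monomial (ee b (ν + 1 - b))
                ((c (ν + 2 + b) - (ν : ℂ) * (if b < ν then
                    c (b + 1) / ((ν : ℂ) * l - l * b - ((ν - b : ℕ) : ℂ)) else 0))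
                  / ((1 : ℂ) - l * b - ((ν + 1 - b : ℕ) : ℂ))))
              = monomial (ee b (ν + 1 - b))
                  (c (ν + 2 + b) - (ν : ℂ) * (if b < ν then
                    c (b + 1) / ((ν : ℂ) * l - l * b - ((ν - b : ℕ) : ℂ)) else 0)))]
        rw [Finset.smul_sum, ← Finset.sum_add_distrib]
        refine Finset.sum_congr rfl fun b hb => ?_
        rw [smul_monomial, ← map_add]
        congr 1
        simp only [smul_eq_mul]
        ring
  refine ⟨part1, part2, ?_⟩
  rintro ⟨Hc, H2, hHc, hH2, heq⟩
  have hmem : vmon (ν + 1) (ν + 1) ∈ {Q : Fin 2 → MvPolynomial (Fin 2) ℂ | ∃ c : ℕ → ℂ,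
      Q = ∑ h ∈ (Finset.Icc 1 (2 * ν + 3)).erase (ν + 1), c h • vmon (ν + 1) h} :=
    (Set.ext_iff.mp part2 (vmon (ν + 1) (ν + 1))).mp ⟨Hc, H2, hHc, hH2, heq⟩
  obtain ⟨c, hc⟩ := hmem
  have h0 := congrFun hc 0
  rw [sum_vmon_0] at h0
  have hl0 : vmon (ν + 1) (ν + 1) 0 = monomial (ee (ν + 1) 0) 1 := by
    rw [vmon, if_pos le_rfl]
    show X 0 ^ (ν + 1) * X 1 ^ (ν + 1 - (ν + 1)) = _
    rw [Nat.sub_self, X_pow_ee]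
  rw [hl0] at h0
  have hco := congrArg (coeff (ee (ν + 1) 0)) h0
  rw [coeff_monomial, if_pos rfl, coeff_sum] at hco
  rw [Finset.sum_eq_zero (fun a ha => by
    rw [coeff_monomial, if_neg]
    intro hcontr
    have h1 := ee_inj0 hcontr
    have h2 := Finset.mem_range.mp ha
    omega)] at hco
  exact one_ne_zero hco
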